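/- For n ≥ 0, Chow–Gessel's type B q-Eulerian polynomial satisfies B_{2n+1}(-q^{-2n-1}, q) = 0, and B_{2n}(-q^{-2n-1}, q) = (-1)^n q^{-n(2n+1)} b_{2n,n}(q), where b_{n,k}(q) are defined by the recurrence b_{n,k}(q) = [2k+1]_q b_{n-1,k}(q) + (1+q)(1+q^{2k-1}) q^{2k-1} [n+1-2k]_{q^2} b_{n-1,k-1}(q) with b_{1,0}(q)=1. -/

import Mathlib

/-!
Write `B_n(t) = F_n(t) (t; q²)_{n+1}` with `F_n(t) = ∑_j [2j+1]_q^n t^j`. Since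
`(1 - q) [2j+1]_q = 1 - q · q^{2j}`, one gets `(1 - q) F_{n+1}(t) = F_n(t) - q F_n(q² t)`,
and with `(t; q²)_{n+2} = (1 - q^{2n+2} t) (t; q²)_{n+1} = (1 - t) (q² t; q²)_{n+1}` this becomes
`(1 - q) B_{n+1}(t) = (1 - q^{2n+2} t) B_n(t) - q (1 - t) B_n(q² t)`.
The recurrence of `b_{n,k}` is exactly what makes the expansion
`∑_k b_{n,k}(q) t^k ∏_{k ≤ i < n-k} (1 + q^{2i+1} t)` satisfy the same functional equation,
so by induction on `n` (for all `t` at once, cancelling `1 - q`) it equals `B_n(t)`.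
At `t = -q^{-2n-1}` the factor `1 + q^{2n+1} t` vanishes, which kills the `k`-th term of the
`N`-th expansion whenever `k ≤ n < N - k`; for `N = 2n + 1` no term survives (the others have
`b_{N,k} = 0`), and for `N = 2n` only `k = n`, which is `t^n b_{2n,n}(q)`.
-/

/-- The `q`-integer `[m]_q = 1 + q + ⋯ + q^{m-1}` as a polynomial in `q`. -/
noncomputable def qint (m : ℕ) : Polynomial ℤ := ∑ i ∈ Finset.range m, Polynomial.X ^ i

/-- The `q²`-integer `[m]_{q²} = 1 + q² + ⋯ + q^{2(m-1)}` as a polynomial in `q`. -/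
noncomputable def qint2 (m : ℕ) : Polynomial ℤ := ∑ i ∈ Finset.range m, Polynomial.X ^ (2 * i)

/-- The natural inclusion of `ℤ[q]` into the field `ℚ(q)` of rational functions. -/
noncomputable def toRat : Polynomial ℤ →+* RatFunc ℚ :=
  (algebraMap (Polynomial ℚ) (RatFunc ℚ)).comp (Polynomial.mapRingHom (Int.castRingHom ℚ))

open Polynomial Finset

lemma one_sub_X_mul_qint (m : ℕ) : (1 - X) * qint m = 1 - X ^ m := by
  rw [qint, mul_comm, geom_sum_mul_neg]

lemma one_sub_X_sq_mul_qint2 (m : ℕ) : (1 - X ^ 2) * qint2 m = 1 - X ^ (2 * m) := by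
  simp_rw [qint2, pow_mul]
  rw [mul_comm, geom_sum_mul_neg]

lemma PowerSeries.rescale_one_sub_C_mul_X {R : Type*} [CommRing R] (a c : R) :
    rescale a (1 - C c * X) = 1 - C (c * a) * X := by
  ext n
  rw [coeff_rescale]
  rcases n with _ | _ | n <;> simp [coeff_X, coeff_one, mul_comm]

lemma Polynomial.coe_comp_C_mul_X {R : Type*} [CommSemiring R] (p : R[X]) (a : R) :
    ((p.comp (C a * X) : R[X]) : PowerSeries R) = PowerSeries.rescale a p := by
  ext n
  rw [coeff_coe, PowerSeries.coeff_rescale, coeff_coe, comp_C_mul_X_coeff, mul_comm]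

noncomputable def oddQIntPowSeries (n : ℕ) : PowerSeries ℤ[X] :=
  PowerSeries.mk fun j => qint (2 * j + 1) ^ n

/-- `(t; q²)_{n+1}`, with `t` the variable of the power series. -/
noncomputable def qSqPochhammer (n : ℕ) : PowerSeries ℤ[X] :=
  ∏ i ∈ range (n + 1), (1 - PowerSeries.C (X ^ (2 * i)) * PowerSeries.X)

lemma C_one_sub_X_mul_oddQIntPowSeries_succ (n : ℕ) :
    PowerSeries.C (1 - X) * oddQIntPowSeries (n + 1) =
      oddQIntPowSeries n -
        PowerSeries.C X * PowerSeries.rescale (X ^ 2) (oddQIntPowSeries n) := by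
  refine PowerSeries.ext fun j => ?_
  have h := one_sub_X_mul_qint (2 * j + 1)
  rw [PowerSeries.coeff_C_mul, map_sub, PowerSeries.coeff_C_mul]
  simp only [oddQIntPowSeries, PowerSeries.rescale_mk, PowerSeries.coeff_mk]
  linear_combination qint (2 * j + 1) ^ n * h

lemma qSqPochhammer_succ (n : ℕ) :
    qSqPochhammer (n + 1) =
      (1 - PowerSeries.C (X ^ (2 * (n + 1))) * PowerSeries.X) * qSqPochhammer n := by
  rw [qSqPochhammer, prod_range_succ, mul_comm, qSqPochhammer]

lemma qSqPochhammer_succ' (n : ℕ) :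
    qSqPochhammer (n + 1) =
      (1 - PowerSeries.X) * PowerSeries.rescale (X ^ 2) (qSqPochhammer n) := by
  rw [qSqPochhammer, qSqPochhammer, prod_range_succ', map_prod, mul_comm]
  simp_rw [PowerSeries.rescale_one_sub_C_mul_X, ← pow_add, mul_zero, pow_zero, map_one, one_mul,
    mul_add]

lemma oddQIntPowSeries_zero_mul_qSqPochhammer_zero :
    oddQIntPowSeries 0 * qSqPochhammer 0 = 1 := by
  rw [qSqPochhammer, prod_range_one, mul_zero, pow_zero, map_one, one_mul]
  exact PowerSeries.mk_one_mul_one_sub_eq_one _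

lemma C_one_sub_X_mul_eulerianB_succ {p p' : ℤ[X][X]} {n : ℕ}
    (hp : (p : PowerSeries ℤ[X]) = oddQIntPowSeries n * qSqPochhammer n)
    (hp' : (p' : PowerSeries ℤ[X]) = oddQIntPowSeries (n + 1) * qSqPochhammer (n + 1)) :
    C (1 - X) * p' =
      (1 - C (X ^ (2 * (n + 1))) * X) * p - C X * ((1 - X) * p.comp (C (X ^ 2) * X)) := by
  rw [← Polynomial.coe_inj]
  push_cast
  rw [coe_comp_C_mul_X, hp, hp', map_mul]
  linear_combination qSqPochhammer (n + 1) * C_one_sub_X_mul_oddQIntPowSeries_succ n +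
    oddQIntPowSeries n * qSqPochhammer_succ n -
    PowerSeries.C X * PowerSeries.rescale (X ^ 2) (oddQIntPowSeries n) * qSqPochhammer_succ' n

lemma one_sub_mul_eval₂_eulerianB_succ {K : Type*} [CommRing K] (φ : ℤ[X] →+* K) (t : K)
    {p p' : ℤ[X][X]} {n : ℕ}
    (hp : (p : PowerSeries ℤ[X]) = oddQIntPowSeries n * qSqPochhammer n)
    (hp' : (p' : PowerSeries ℤ[X]) = oddQIntPowSeries (n + 1) * qSqPochhammer (n + 1)) :
    (1 - φ X) * eval₂ φ t p' =
      (1 - φ X ^ (2 * (n + 1)) * t) * eval₂ φ t p -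
        φ X * (1 - t) * eval₂ φ (φ X ^ 2 * t) p := by
  have h := congrArg (eval₂ φ t) (C_one_sub_X_mul_eulerianB_succ hp hp')
  simp only [eval₂_mul, eval₂_sub, eval₂_one, eval₂_pow, eval₂_C, eval₂_X, eval₂_comp, map_sub,
    map_one, map_pow] at h
  linear_combination h

section OddQProd

variable {K : Type*} [CommSemiring K]

def oddQProd (q t : K) (a s : ℕ) : K :=
  ∏ j ∈ range s, (1 + q ^ (2 * (a + j) + 1) * t)

variable (q t : K) (a s : ℕ)

lemma oddQProd_zero : oddQProd q t a 0 = 1 := prod_range_zero _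

lemma oddQProd_succ :
    oddQProd q t a (s + 1) = oddQProd q t a s * (1 + q ^ (2 * (a + s) + 1) * t) :=
  prod_range_succ _ _

lemma oddQProd_succ' :
    oddQProd q t a (s + 1) = (1 + q ^ (2 * a + 1) * t) * oddQProd q t (a + 1) s := by
  rw [oddQProd, prod_range_succ', mul_comm, add_zero]
  exact congrArg _ (prod_congr rfl fun j _ => by ring)

lemma oddQProd_sq_mul : oddQProd q (q ^ 2 * t) a s = oddQProd q t (a + 1) s :=
  prod_congr rfl fun j _ => by ring

lemma oddQProd_eq_zero {j : ℕ} (hj : j < s) (h : 1 + q ^ (2 * (a + j) + 1) * t = 0) :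
    oddQProd q t a s = 0 :=
  prod_eq_zero (mem_range.2 hj) h

def gammaBasis (N k : ℕ) : K := t ^ k * oddQProd q t k (N - 2 * k)

lemma gammaBasis_eq_zero {n N k : ℕ} (ht : 1 + q ^ (2 * n + 1) * t = 0) (hkn : k ≤ n)
    (hnN : n + k < N) : gammaBasis q t N k = 0 := by
  rw [gammaBasis, oddQProd_eq_zero q t k _ (j := n - k) (by omega)
    (by rwa [show 2 * (k + (n - k)) + 1 = 2 * n + 1 by omega]), mul_zero]

end OddQProd

section CoefficientRecurrence

noncomputable def bWeight (n k : ℕ) : ℤ[X] :=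
  (1 + X) * (1 + X ^ (2 * k + 1)) * X ^ (2 * k + 1) * qint2 (n - 2 * k)

structure BRecurrence (b : ℕ → ℕ → ℤ[X]) : Prop where
  eq_zero : ∀ n k, n / 2 < k → b n k = 0
  succ_zero : ∀ n, b (n + 1) 0 = b n 0
  succ_succ : ∀ n k, b (n + 1) (k + 1) = qint (2 * (k + 1) + 1) * b n (k + 1) + bWeight n k * b n k

variable {b : ℕ → ℕ → ℤ[X]}

lemma b_succ_zero (hb00 : b 0 0 = 1) (hb10 : b 1 0 = 1)
    (hbrec0 : ∀ n, 2 ≤ n → b n 0 = b (n - 1) 0) (n : ℕ) : b (n + 1) 0 = b n 0 := by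
  rcases n with _ | n
  · rw [hb10, hb00]
  · exact hbrec0 (n + 2) (by omega)

lemma b_succ_succ (hb0 : ∀ n k, n / 2 < k → b n k = 0)
    (hbrec : ∀ n k, 2 ≤ n → 1 ≤ k → k ≤ n / 2 →
      b n k = qint (2 * k + 1) * b (n - 1) k +
        (1 + X) * (1 + X ^ (2 * k - 1)) * X ^ (2 * k - 1) * qint2 (n + 1 - 2 * k) *
          b (n - 1) (k - 1))
    (n k : ℕ) :
    b (n + 1) (k + 1) = qint (2 * (k + 1) + 1) * b n (k + 1) + bWeight n k * b n k := by
  by_cases hk : k + 1 ≤ (n + 1) / 2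
  · rw [hbrec (n + 1) (k + 1) (by omega) (by omega) hk, bWeight, Nat.add_sub_cancel,
      Nat.add_sub_cancel, show 2 * (k + 1) - 1 = 2 * k + 1 by omega,
      show n + 1 + 1 - 2 * (k + 1) = n - 2 * k by omega]
  · rw [hb0 (n + 1) (k + 1) (by omega), hb0 n (k + 1) (by omega), bWeight,
      show n - 2 * k = 0 by omega, qint2, range_zero, sum_empty]
    ring

end CoefficientRecurrence

section Expansion

variable {K : Type*} [CommRing K] (φ : ℤ[X] →+* K)

noncomputable def bExpansion (b : ℕ → ℕ → ℤ[X]) (N : ℕ) (t : K) : K :=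
  ∑ k ∈ range (N + 1), gammaBasis (φ X) t N k * φ (b N k)

variable (t : K) {b : ℕ → ℕ → ℤ[X]}

lemma one_sub_mul_gammaBasis_succ {N k : ℕ} (hk : 2 * k ≤ N) :
    (1 - φ X) * (gammaBasis (φ X) t (N + 1) k * φ (qint (2 * k + 1)) +
      gammaBasis (φ X) t (N + 1) (k + 1) * φ (bWeight N k)) =
    (1 - φ X ^ (2 * (N + 1)) * t) * gammaBasis (φ X) t N k -
      φ X * (1 - t) * gammaBasis (φ X) (φ X ^ 2 * t) N k := by
  obtain ⟨s, rfl⟩ : ∃ s, N = 2 * k + s := ⟨N - 2 * k, by omega⟩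
  simp only [gammaBasis, bWeight]
  rw [show 2 * k + s + 1 - 2 * k = s + 1 by omega,
    show 2 * k + s + 1 - 2 * (k + 1) = s - 1 by omega, show 2 * k + s - 2 * k = s by omega,
    oddQProd_sq_mul]
  have hQ : (1 - φ X) * φ (qint (2 * k + 1)) = 1 - φ X ^ (2 * k + 1) := by
    simpa using congrArg φ (one_sub_X_mul_qint (2 * k + 1))
  have hT : (1 - φ X) * (1 + φ X) * φ (qint2 s) = 1 - φ X ^ (2 * s) := by
    have h := congrArg φ (one_sub_X_sq_mul_qint2 s)
    simp only [map_mul, map_sub, map_one, map_pow] at h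
    linear_combination h
  simp only [map_mul, map_add, map_one, map_pow]
  rcases s with _ | s
  · rw [oddQProd_succ, oddQProd_zero, oddQProd_zero, qint2, range_zero, sum_empty, map_zero]
    linear_combination t ^ k * (1 + φ X ^ (2 * k + 1) * t) * hQ
  · rw [oddQProd_succ _ _ (k + 1) s, oddQProd_succ _ _ k (s + 1), oddQProd_succ' _ _ k s,
      Nat.add_sub_cancel]
    linear_combination t ^ k * (1 + φ X ^ (2 * k + 1) * t) * oddQProd (φ X) t (k + 1) s *
        (1 + φ X ^ (2 * (k + 1 + s) + 1) * t) * hQ +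
      t ^ (k + 1) * oddQProd (φ X) t (k + 1) s * (1 + φ X ^ (2 * k + 1)) * φ X ^ (2 * k + 1) *
        hT

lemma bExpansion_succ (hb : BRecurrence b) (N : ℕ) :
    bExpansion φ b (N + 1) t = ∑ k ∈ range (N + 1),
      (gammaBasis (φ X) t (N + 1) k * φ (qint (2 * k + 1)) +
        gammaBasis (φ X) t (N + 1) (k + 1) * φ (bWeight N k)) * φ (b N k) := by
  have hq1 : qint 1 = 1 := by simp [qint]
  let g k := gammaBasis (φ X) t (N + 1) k * φ (qint (2 * k + 1)) * φ (b N k)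
  let h k := gammaBasis (φ X) t (N + 1) (k + 1) * φ (bWeight N k) * φ (b N k)
  calc bExpansion φ b (N + 1) t
      = (∑ k ∈ range (N + 1), g (k + 1) + g 0) + ∑ k ∈ range (N + 1), h k := by
        rw [bExpansion, sum_range_succ', hb.succ_zero]
        simp only [g, h, hb.succ_succ, map_add, map_mul, mul_add, sum_add_distrib, mul_zero,
          zero_add, hq1, map_one, mul_one, mul_assoc]
        ring
    _ = ∑ k ∈ range (N + 1), g k + ∑ k ∈ range (N + 1), h k := by
        rw [← sum_range_succ', sum_range_succ]
        simp only [g, hb.eq_zero N (N + 1) (by omega), map_zero, mul_zero, add_zero]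
    _ = _ := by
        rw [← sum_add_distrib]
        exact sum_congr rfl fun k _ => by simp only [g, h]; ring

lemma one_sub_mul_bExpansion_succ (hb : BRecurrence b) (N : ℕ) :
    (1 - φ X) * bExpansion φ b (N + 1) t =
      (1 - φ X ^ (2 * (N + 1)) * t) * bExpansion φ b N t -
        φ X * (1 - t) * bExpansion φ b N (φ X ^ 2 * t) := by
  rw [bExpansion_succ φ t hb, bExpansion, bExpansion, mul_sum, mul_sum, mul_sum,
    ← sum_sub_distrib]
  refine sum_congr rfl fun k _ => ?_
  by_cases hk : 2 * k ≤ N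
  · linear_combination φ (b N k) * one_sub_mul_gammaBasis_succ φ t hk
  · rw [hb.eq_zero N k (by omega), map_zero]
    ring

lemma bExpansion_two_mul_add_one_eq_zero (hb0 : ∀ n k, n / 2 < k → b n k = 0) {n : ℕ}
    (ht : 1 + φ X ^ (2 * n + 1) * t = 0) : bExpansion φ b (2 * n + 1) t = 0 := by
  refine sum_eq_zero fun k hk => ?_
  rcases le_or_gt k n with hkn | hkn
  · rw [gammaBasis_eq_zero _ _ ht (by omega) (by omega), zero_mul]
  · rw [hb0 _ k (by omega), map_zero, mul_zero]

lemma bExpansion_two_mul_eq (hb0 : ∀ n k, n / 2 < k → b n k = 0) {n : ℕ}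
    (ht : 1 + φ X ^ (2 * n + 1) * t = 0) :
    bExpansion φ b (2 * n) t = t ^ n * φ (b (2 * n) n) := by
  rw [bExpansion, sum_eq_single_of_mem n (mem_range.2 (by omega)), gammaBasis, Nat.sub_self,
    oddQProd_zero, mul_one]
  intro k _ hkn
  rcases lt_or_gt_of_ne hkn with hkn | hkn
  · rw [gammaBasis_eq_zero _ _ ht (by omega) (by omega), zero_mul]
  · rw [hb0 _ k (by omega), map_zero, mul_zero]

theorem eval₂_eq_bExpansion [IsDomain K] (hq : φ X ≠ 1) {B : ℕ → ℤ[X][X]}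
    (hB : ∀ n, (B n : PowerSeries ℤ[X]) = oddQIntPowSeries n * qSqPochhammer n)
    (hb00 : b 0 0 = 1) (hb : BRecurrence b) (N : ℕ) : eval₂ φ t (B N) = bExpansion φ b N t := by
  induction N generalizing t with
  | zero =>
    have hB0 : B 0 = 1 := Polynomial.coe_inj.1 <| (hB 0).trans <|
      oddQIntPowSeries_zero_mul_qSqPochhammer_zero.trans Polynomial.coe_one.symm
    rw [hB0, eval₂_one, bExpansion, sum_range_one, hb00, map_one, mul_one, gammaBasis, pow_zero,
      oddQProd_zero, mul_one]
  | succ N ih =>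
    refine mul_left_cancel₀ (sub_ne_zero.2 hq.symm) ?_
    rw [one_sub_mul_eval₂_eulerianB_succ φ t (hB N) (hB (N + 1)), ih, ih,
      one_sub_mul_bExpansion_succ φ t hb]

end Expansion

lemma toRat_X : toRat X = RatFunc.X := by
  simp [toRat, RatFunc.algebraMap_X]

lemma toRat_X_ne_one : toRat X ≠ 1 := by
  rw [toRat_X, ← RatFunc.algebraMap_X, ← map_one (algebraMap ℚ[X] (RatFunc ℚ)), Ne,
    (RatFunc.algebraMap_injective ℚ).eq_iff]
  exact X_ne_C 1

/-- For `n ≥ 0`, Chow–Gessel's type B q-Eulerian polynomials (defined by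
`∑_{j≥0} [2j+1]_q^n t^j = B_n(t,q)/(t;q²)_{n+1}`) satisfy
`B_{2n+1}(-q^{-2n-1}, q) = 0` and
`B_{2n}(-q^{-2n-1}, q) = (-1)^n q^{-n(2n+1)} b_{2n,n}(q)`, where `b_{n,k}(q)` satisfy
`b_{n,k} = [2k+1]_q b_{n-1,k} + (1+q)(1+q^{2k-1}) q^{2k-1} [n+1-2k]_{q²} b_{n-1,k-1}`
with `b_{1,0}(q) = 1` (and `b_{0,0}(q) = 1`, `b_{n,k}(q) = 0` for `k > ⌊n/2⌋`). -/
theorem chowGessel_qEulerianB_special_values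
    (B : ℕ → Polynomial (Polynomial ℤ))
    (hB : ∀ n, ((B n : PowerSeries (Polynomial ℤ)) =
      PowerSeries.mk (fun j => (qint (2 * j + 1)) ^ n) *
        ∏ i ∈ Finset.range (n + 1),
          (1 - PowerSeries.C (R := Polynomial ℤ) (Polynomial.X ^ (2 * i)) * PowerSeries.X)))
    (b : ℕ → ℕ → Polynomial ℤ)
    (hb00 : b 0 0 = 1)
    (hb10 : b 1 0 = 1)
    (hb0 : ∀ n k, n / 2 < k → b n k = 0)
    (hbrec0 : ∀ n, 2 ≤ n → b n 0 = b (n - 1) 0)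
    (hbrec : ∀ n k, 2 ≤ n → 1 ≤ k → k ≤ n / 2 →
      b n k = qint (2 * k + 1) * b (n - 1) k +
        (1 + Polynomial.X) * (1 + Polynomial.X ^ (2 * k - 1)) * Polynomial.X ^ (2 * k - 1) *
          qint2 (n + 1 - 2 * k) * b (n - 1) (k - 1)) :
    ∀ n : ℕ,
      Polynomial.eval₂ toRat (-(RatFunc.X ^ (-(2 * (n : ℤ) + 1)))) (B (2 * n + 1)) = 0 ∧
      Polynomial.eval₂ toRat (-(RatFunc.X ^ (-(2 * (n : ℤ) + 1)))) (B (2 * n)) =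
        (-1 : RatFunc ℚ) ^ n * RatFunc.X ^ (-((n : ℤ) * (2 * n + 1))) * toRat (b (2 * n) n) := by
  intro n
  have hexp := eval₂_eq_bExpansion toRat (-(RatFunc.X ^ (-(2 * (n : ℤ) + 1)))) toRat_X_ne_one hB
    hb00 ⟨hb0, b_succ_zero hb00 hb10 hbrec0, b_succ_succ hb0 hbrec⟩
  have hroot : 1 + toRat X ^ (2 * n + 1) * -(RatFunc.X ^ (-(2 * (n : ℤ) + 1))) = 0 := by
    rw [toRat_X, mul_neg, ← zpow_natCast, ← zpow_add₀ RatFunc.X_ne_zero]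
    simp
  refine ⟨by rw [hexp, bExpansion_two_mul_add_one_eq_zero toRat _ hb0 hroot], ?_⟩
  rw [hexp, bExpansion_two_mul_eq toRat _ hb0 hroot, neg_pow,
    ← zpow_natCast (RatFunc.X ^ (-(2 * (n : ℤ) + 1))), ← zpow_mul]
  ring_nf
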